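/- arXiv:2512.03859 — 4 statements merged into one kernel-verified Lean document; each statement's English description precedes it below -/
import Mathlib

section
/- Consider the step-down Holm procedure applied to m values p_1,...,p_m with thresholds λ_j = α/(m+1-j): sort the values in increasing order p_(1) ≤ ... ≤ p_(m) and reject the hypotheses corresponding to p_(1),...,p_(j*) where j* = inf{j : p_(j) > λ_j} - 1. If the null values indexed by S₀ are super uniform (P(p_j ≤ t) ≤ t), then the family-wise error rate P(at least one index in S₀ is rejected) is at most α. -/
open MeasureTheory ProbabilityTheory

/-- In the Holm step-down procedure with thresholds `λ_j = α/(m+1-j)`, position `k`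
(0-indexed) of the sorted values is rejected iff every position `k' ≤ k` satisfies
`p_(k'+1) ≤ α/(m - k')`. Index `i` is rejected iff its sorted position is rejected. -/
def holmRejects {Ω : Type*} {m : ℕ} (p : Fin m → Ω → ℝ) (α : ℝ) (i : Fin m) (ω : Ω) : Prop :=
  ∃ k : Fin m, Tuple.sort (fun j => p j ω) k = i ∧
    ∀ k' : Fin m, k' ≤ k → p (Tuple.sort (fun j => p j ω) k') ω ≤ α / ((m : ℝ) - (k' : ℕ))

/-- Holm step-down FWER control: if the null p-values (indexed by `S₀`) are super uniform,
the Holm procedure with thresholds `λ_j = α/(m+1-j)` has FWER at most `α`. -/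
theorem stmt_3 {Ω : Type*} [MeasureSpace Ω] [IsProbabilityMeasure (ℙ : Measure Ω)]
    {m : ℕ} (hm : 0 < m) (p : Fin m → Ω → ℝ) (S₀ : Finset (Fin m))
    (α : ℝ) (hα : α ∈ Set.Ioo (0 : ℝ) 1)
    (hrange : ∀ j ω, p j ω ∈ Set.Icc (0 : ℝ) 1)
    (hnull : ∀ j ∈ S₀, ∀ t ∈ Set.Icc (0 : ℝ) 1,
      ℙ {ω | p j ω ≤ t} ≤ ENNReal.ofReal t) :
    ℙ {ω | ∃ i ∈ S₀, holmRejects p α i ω} ≤ ENNReal.ofReal α := by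
  obtain ⟨hα0, hα1⟩ := hα
  rcases S₀.eq_empty_or_nonempty with rfl | hS
  · simp
  set s₀ := S₀.card with hs₀
  have hs₀pos : 0 < s₀ := Finset.card_pos.mpr hS
  have hs₀R : (0 : ℝ) < (s₀ : ℝ) := by exact_mod_cast hs₀pos
  set t := α / s₀ with ht
  have ht0 : 0 ≤ t := div_nonneg hα0.le hs₀R.le
  have ht1 : t ≤ 1 := by
    have h1 : t ≤ α := by
      rw [ht]
      exact div_le_self hα0.le (by exact_mod_cast hs₀pos)
    linarith
  have hsub : {ω | ∃ i ∈ S₀, holmRejects p α i ω} ⊆ ⋃ j ∈ S₀, {ω | p j ω ≤ t} := by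
    intro ω hω
    simp only [Set.mem_setOf_eq, holmRejects] at hω
    obtain ⟨i, hi, k, hk, hthr⟩ := hω
    set σ := Tuple.sort (fun j => p j ω) with hσ
    have hkmem : k ∈ Finset.univ.filter (fun k' : Fin m => σ k' ∈ S₀) := by
      simp [hk, hi]
    have hne : (Finset.univ.filter (fun k' : Fin m => σ k' ∈ S₀)).Nonempty := ⟨k, hkmem⟩
    set k₀ := Finset.min' _ hne with hk₀
    have hk₀mem : σ k₀ ∈ S₀ := by
      have := Finset.min'_mem _ hne
      simpa using this
    have hk₀le : k₀ ≤ k := Finset.min'_le _ _ hkmem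
    have hcard : s₀ ≤ m - (k₀ : ℕ) := by
      have hsubset : S₀ ⊆ (Finset.Ici k₀).image σ := by
        intro j hj
        refine Finset.mem_image.mpr ⟨σ.symm j, Finset.mem_Ici.mpr ?_, by simp⟩
        exact Finset.min'_le _ _ (by simp [hj])
      calc s₀ ≤ ((Finset.Ici k₀).image σ).card := Finset.card_le_card hsubset
        _ ≤ (Finset.Ici k₀).card := Finset.card_image_le
        _ = m - (k₀ : ℕ) := Fin.card_Ici k₀
    have hk₀lt : (k₀ : ℕ) < m := k₀.isLt
    have hreal : (s₀ : ℝ) ≤ (m : ℝ) - (k₀ : ℕ) := by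
      have h1 : ((s₀ : ℕ) : ℝ) ≤ ((m - (k₀ : ℕ) : ℕ) : ℝ) := Nat.cast_le.mpr hcard
      rwa [Nat.cast_sub hk₀lt.le] at h1
    have hp : p (σ k₀) ω ≤ α / ((m : ℝ) - (k₀ : ℕ)) := hthr k₀ hk₀le
    have hle : α / ((m : ℝ) - (k₀ : ℕ)) ≤ t := by
      rw [ht]
      gcongr
    exact Set.mem_biUnion hk₀mem (le_trans hp hle)
  calc ℙ {ω | ∃ i ∈ S₀, holmRejects p α i ω}
      ≤ ℙ (⋃ j ∈ S₀, {ω | p j ω ≤ t}) := measure_mono hsub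
    _ ≤ ∑ j ∈ S₀, ℙ {ω | p j ω ≤ t} := measure_biUnion_finset_le _ _
    _ ≤ ∑ j ∈ S₀, ENNReal.ofReal t := Finset.sum_le_sum (fun j hj => hnull j hj t ⟨ht0, ht1⟩)
    _ = s₀ • ENNReal.ofReal t := by rw [Finset.sum_const]
    _ = ENNReal.ofReal α := by
        rw [nsmul_eq_mul, ← ENNReal.ofReal_natCast, ← ENNReal.ofReal_mul (by positivity)]
        congr 1
        rw [ht]
        field_simp
end

section
/- Under arbitrary dependence, the Benjamini–Yekutieli procedure with thresholds λ_j = αj/(m·H_m), where H_m = Σ_{l=1}^m 1/l, applied as a step-up rule to m values whose null components are super uniform, controls the false discovery rate at level at most (m₀/m)·α. -/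
/-!
On the event that a null `j` is rejected, `p_j ≤ λ_R` with `R = j*`, so its contribution `1/R` to
the false discovery proportion is at most the weight `w(p_j) = ∑_k 𝟙{λ_{k-1} < p_j ≤ λ_k} / k`,
which no longer depends on `R`. Writing `λ_k = c k`, super-uniformity gives
`P(p_j ≤ λ_k) ≤ c k`, and summation by parts turns this into `E[w(p_j)] ≤ c H_m = α / m`.
-/

open MeasureTheory ProbabilityTheory

/-- Step-up index: `j* = sup {j : 1 ≤ j ≤ m, q_(j) ≤ λ_j}` (with `j* = 0` if empty),
where `q_(j)` is the `j`-th order statistic of `q`. -/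
noncomputable def stepUpIndex {m : ℕ} (q : Fin m → ℝ) (lam : ℕ → ℝ) : ℕ :=
  sSup {j | ∃ h : j - 1 < m, 0 < j ∧ q (Tuple.sort q ⟨j - 1, h⟩) ≤ lam j}

/-- Index `i` is rejected by the step-up procedure iff its sorted position is below `j*`. -/
noncomputable def stepUpRejects {m : ℕ} (q : Fin m → ℝ) (lam : ℕ → ℝ) (i : Fin m) : Prop :=
  ∃ k : Fin m, Tuple.sort q k = i ∧ (k : ℕ) < stepUpIndex q lam

open Finset

section Summation

variable {m : ℕ}

theorem div_le_sum_range_sub_div {f : ℕ → ℝ} (hf : Monotone f) (hf0 : f 0 = 0) {J : ℕ}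
    (hJ : J ≤ m) : f J / J ≤ ∑ k ∈ range m, (f (k + 1) - f k) / (k + 1) := by
  have hinc : ∀ k, 0 ≤ f (k + 1) - f k := fun k => sub_nonneg.2 (hf k.le_succ)
  calc f J / J = ∑ k ∈ range J, (f (k + 1) - f k) / J := by
        rw [← sum_div, sum_range_sub, hf0, sub_zero]
    _ ≤ ∑ k ∈ range J, (f (k + 1) - f k) / (k + 1) := by
        refine sum_le_sum fun k hk => div_le_div_of_nonneg_left (hinc k) (by positivity) ?_
        exact_mod_cast mem_range.1 hk
    _ ≤ ∑ k ∈ range m, (f (k + 1) - f k) / (k + 1) :=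
        sum_le_sum_of_subset_of_nonneg (range_subset_range.2 hJ)
          fun k _ _ => div_nonneg (hinc k) (by positivity)

/-- Summation by parts, with the slack `c - a (n + 1) / (n + 1) ≥ 0` carried through the
induction. -/
theorem sum_range_sub_div_add_le_mul_harmonic {a : ℕ → ℝ} {c : ℝ} (h0 : a 0 = 0) :
    ∀ n, (∀ k ≤ n + 1, a k ≤ c * k) →
      ∑ k ∈ range (n + 1), (a (k + 1) - a k) / (k + 1) + (c - a (n + 1) / (n + 1)) ≤
        c * harmonic (n + 1)
  | 0, _ => by simp [h0]
  | n + 1, ha => by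
    have ih := sum_range_sub_div_add_le_mul_harmonic h0 n fun k hk => ha k (by omega)
    have han : a (n + 1) / (n + 1) - a (n + 1) / (n + 2) ≤ c / (n + 2) := by
      have := ha (n + 1) (by omega)
      push_cast at this
      rw [div_sub_div _ _ (by positivity) (by positivity), div_le_div_iff₀ (by positivity)
        (by positivity)]
      nlinarith
    rw [sum_range_succ, harmonic_succ]
    push_cast at ih ⊢
    rw [show (n : ℝ) + 1 + 1 = n + 2 by ring]
    linarith [sub_div (a (n + 1 + 1)) (a (n + 1)) (n + 2),
      show c * (harmonic (n + 1) + (n + 2 : ℝ)⁻¹) = c * harmonic (n + 1) + c / (n + 2) by ring]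

theorem sum_range_sub_div_le_mul_harmonic {a : ℕ → ℝ} {c : ℝ} (h0 : a 0 = 0)
    (ha : ∀ k ≤ m, a k ≤ c * k) :
    ∑ k ∈ range m, (a (k + 1) - a k) / (k + 1) ≤ c * harmonic m := by
  cases m with
  | zero => simp
  | succ n =>
    have h := sum_range_sub_div_add_le_mul_harmonic h0 n ha
    have hlast : a (n + 1) / (n + 1) ≤ c := by
      rw [div_le_iff₀ (by positivity)]
      exact_mod_cast ha (n + 1) le_rfl
    linarith

end Summation

section Weights

variable (lam : ℕ → ℝ) (m : ℕ)

noncomputable def belowThreshold (x : ℝ) (k : ℕ) : ℝ :=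
  if 0 < k ∧ x ≤ lam k then 1 else 0

/-- Telescoped form of `∑_{k=1}^m 𝟙{λ_{k-1} < x ≤ λ_k} / k`, with `λ_0 = -∞`. -/
noncomputable def harmonicWeight (x : ℝ) : ℝ :=
  ∑ k ∈ range m, (belowThreshold lam x (k + 1) - belowThreshold lam x k) / (k + 1)

variable {lam m}

theorem belowThreshold_monotone (hlam : Monotone lam) (x : ℝ) :
    Monotone (belowThreshold lam x) := by
  intro k l hkl
  unfold belowThreshold
  split_ifs with hk hl
  exacts [le_rfl, absurd ⟨by omega, hk.2.trans (hlam hkl)⟩ hl, zero_le_one, le_rfl]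

theorem harmonicWeight_nonneg (hlam : Monotone lam) (x : ℝ) : 0 ≤ harmonicWeight lam m x :=
  sum_nonneg fun k _ =>
    div_nonneg (sub_nonneg.2 (belowThreshold_monotone hlam x k.le_succ)) (by positivity)

theorem inv_le_harmonicWeight (hlam : Monotone lam) {x : ℝ} {J : ℕ} (hJ0 : 0 < J) (hJ : J ≤ m)
    (hx : x ≤ lam J) : (J : ℝ)⁻¹ ≤ harmonicWeight lam m x := by
  have h := div_le_sum_range_sub_div (belowThreshold_monotone hlam x)
    (by simp [belowThreshold]) hJ
  rwa [belowThreshold, if_pos ⟨hJ0, hx⟩, one_div] at h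

end Weights

section StepUp

variable {m : ℕ} {q : Fin m → ℝ} {lam : ℕ → ℝ}

theorem stepUpIndex_le (q : Fin m → ℝ) (lam : ℕ → ℝ) : stepUpIndex q lam ≤ m :=
  csSup_le' fun _ ⟨_, _, _⟩ => by omega

theorem exists_sort_le_of_stepUpIndex_pos (h : 0 < stepUpIndex q lam) :
    ∃ hJ : stepUpIndex q lam - 1 < m,
      q (Tuple.sort q ⟨stepUpIndex q lam - 1, hJ⟩) ≤ lam (stepUpIndex q lam) := by
  unfold stepUpIndex at h ⊢
  set S : Set ℕ := {j | ∃ h : j - 1 < m, 0 < j ∧ q (Tuple.sort q ⟨j - 1, h⟩) ≤ lam j}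
  have hS : S.Nonempty := Set.nonempty_iff_ne_empty.2 fun hempty => by simp [hempty] at h
  obtain ⟨hJ, -, hle⟩ := Nat.sSup_mem hS ⟨m, fun j ⟨_, _, _⟩ => by omega⟩
  exact ⟨hJ, hle⟩

theorem stepUpRejects.le_lam_stepUpIndex {i : Fin m} (h : stepUpRejects q lam i) :
    0 < stepUpIndex q lam ∧ q i ≤ lam (stepUpIndex q lam) := by
  obtain ⟨k, rfl, hk⟩ := h
  have hJ0 : 0 < stepUpIndex q lam := by omega
  obtain ⟨hJm, hJ⟩ := exists_sort_le_of_stepUpIndex_pos hJ0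
  have hkJ : k ≤ ⟨_, hJm⟩ := Fin.le_def.2 (by simp only; omega)
  exact ⟨hJ0, (Tuple.monotone_sort q hkJ).trans hJ⟩

theorem ncard_stepUpRejects_div_le (hlam : Monotone lam) (q : Fin m → ℝ) (S : Finset (Fin m)) :
    (Set.ncard {i | i ∈ S ∧ stepUpRejects q lam i} : ℝ) / (max (stepUpIndex q lam) 1 : ℕ) ≤
      ∑ j ∈ S, harmonicWeight lam m (q j) := by
  classical
  have hcard : Set.ncard {i | i ∈ S ∧ stepUpRejects q lam i} =
      ∑ j ∈ S, if stepUpRejects q lam j then 1 else 0 := by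
    rw [← card_filter, ← Set.ncard_coe_finset, coe_filter]
  rw [hcard, Nat.cast_sum, sum_div]
  refine sum_le_sum fun j _ => ?_
  split_ifs with hj
  · obtain ⟨hJ0, hqj⟩ := hj.le_lam_stepUpIndex
    rw [max_eq_left hJ0, Nat.cast_one, one_div]
    exact inv_le_harmonicWeight hlam hJ0 (stepUpIndex_le q lam) hqj
  · simpa using harmonicWeight_nonneg hlam (q j)

end StepUp

theorem belowThreshold_comp_eq_indicator {Ω : Type*} (lam : ℕ → ℝ) (X : Ω → ℝ) (k : ℕ) :
    (fun ω => belowThreshold lam (X ω) k) = {ω | 0 < k ∧ X ω ≤ lam k}.indicator 1 := by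
  ext ω
  simp [belowThreshold, Set.indicator_apply]

section Integral

variable {Ω : Type*} [MeasurableSpace Ω] {μ : Measure Ω} [IsFiniteMeasure μ] {X : Ω → ℝ}
  {lam : ℕ → ℝ}

theorem measurableSet_belowThreshold (hX : Measurable X) (k : ℕ) :
    MeasurableSet {ω | 0 < k ∧ X ω ≤ lam k} :=
  (MeasurableSet.const _).inter (measurableSet_le hX measurable_const)

theorem integrable_belowThreshold (hX : Measurable X) (k : ℕ) :
    Integrable (fun ω => belowThreshold lam (X ω) k) μ := by
  rw [belowThreshold_comp_eq_indicator]
  exact (integrable_const 1).indicator (measurableSet_belowThreshold hX k)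

theorem integrable_harmonicWeight (hX : Measurable X) (m : ℕ) :
    Integrable (fun ω => harmonicWeight lam m (X ω)) μ :=
  integrable_finsetSum _ fun k _ =>
    ((integrable_belowThreshold hX (k + 1)).sub (integrable_belowThreshold hX k)).div_const _

theorem integral_harmonicWeight_le (hX : Measurable X) {m : ℕ} {c : ℝ}
    (hle : ∀ k, 0 < k → k ≤ m → μ.real {ω | X ω ≤ lam k} ≤ c * k) :
    ∫ ω, harmonicWeight lam m (X ω) ∂μ ≤ c * harmonic m := by
  set a : ℕ → ℝ := fun k => μ.real {ω | 0 < k ∧ X ω ≤ lam k}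
  have ha : ∀ k, ∫ ω, belowThreshold lam (X ω) k ∂μ = a k := fun k => by
    rw [belowThreshold_comp_eq_indicator, integral_indicator_one
      (measurableSet_belowThreshold hX k)]
  calc ∫ ω, harmonicWeight lam m (X ω) ∂μ
      = ∑ k ∈ range m, (a (k + 1) - a k) / (k + 1) := by
        rw [← sum_congr rfl fun k _ => ?_]
        · exact integral_finsetSum _ fun k _ => ((integrable_belowThreshold hX (k + 1)).sub
            (integrable_belowThreshold hX k)).div_const _
        rw [integral_div, integral_sub (integrable_belowThreshold hX _)
          (integrable_belowThreshold hX _), ha, ha]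
    _ ≤ c * harmonic m := by
        refine sum_range_sub_div_le_mul_harmonic (by simp [a]) fun k hk => ?_
        rcases k.eq_zero_or_pos with rfl | hk0
        · simp [a]
        · simpa [a, hk0] using hle k hk0 hk

end Integral

theorem measureReal_le_of_superUniform {Ω : Type*} [MeasurableSpace Ω] {μ : Measure Ω}
    [IsProbabilityMeasure μ] {X : Ω → ℝ}
    (hX : ∀ t ∈ Set.Icc (0 : ℝ) 1, μ {ω | X ω ≤ t} ≤ ENNReal.ofReal t) {t : ℝ} (ht : 0 ≤ t) :
    μ.real {ω | X ω ≤ t} ≤ t := by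
  rcases le_or_gt t 1 with ht1 | ht1
  · exact ENNReal.toReal_le_of_le_ofReal ht (hX t ⟨ht, ht1⟩)
  · exact measureReal_le_one.trans ht1.le

theorem stmt_4_general {Ω : Type*} [MeasureSpace Ω] [IsProbabilityMeasure (ℙ : Measure Ω)]
    {m : ℕ} (hm : 0 < m) (p : Fin m → Ω → ℝ) (S₀ : Finset (Fin m))
    (α : ℝ) (hα : α ∈ Set.Ioo (0 : ℝ) 1)
    (hmeas : ∀ j, Measurable (p j))
    (hnull : ∀ j ∈ S₀, ∀ t ∈ Set.Icc (0 : ℝ) 1,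
      ℙ {ω | p j ω ≤ t} ≤ ENNReal.ofReal t)
    (lam : ℕ → ℝ)
    (hlam : ∀ j, lam j = α * j / (m * ∑ l ∈ Finset.Icc 1 m, (1 : ℝ) / l)) :
    ∫ ω, ((Set.ncard {i : Fin m | i ∈ S₀ ∧ stepUpRejects (fun j => p j ω) lam i} : ℝ) /
        ((max (stepUpIndex (fun j => p j ω) lam) 1 : ℕ) : ℝ)) ∂ℙ ≤
      (S₀.card : ℝ) / m * α := by
  have hH : ∑ l ∈ Finset.Icc 1 m, (1 : ℝ) / l = harmonic m := by
    simp [harmonic_eq_sum_Icc, one_div]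
  have hHpos : (0 : ℝ) < harmonic m := by exact_mod_cast harmonic_pos hm.ne'
  set c := α / (m * harmonic m)
  have hc : 0 ≤ c := div_nonneg hα.1.le (by positivity)
  have hlam_eq : ∀ k, lam k = c * k := fun k => by rw [hlam, hH]; ring
  have hmono : Monotone lam := fun k l hkl => by
    rw [hlam_eq, hlam_eq]
    gcongr
  have hnull_weight : ∀ j ∈ S₀, ∫ ω, harmonicWeight lam m (p j ω) ≤ c * harmonic m :=
    fun j hj => integral_harmonicWeight_le (hmeas j) fun k _ _ =>
      (hlam_eq k ▸ measureReal_le_of_superUniform (hnull j hj) (by rw [hlam_eq]; positivity))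
  calc _ ≤ ∫ ω, ∑ j ∈ S₀, harmonicWeight lam m (p j ω) :=
        integral_mono_of_nonneg (ae_of_all _ fun ω => by positivity)
          (integrable_finsetSum _ fun j _ => integrable_harmonicWeight (hmeas j) m)
          (ae_of_all _ fun ω => ncard_stepUpRejects_div_le hmono _ S₀)
    _ = ∑ j ∈ S₀, ∫ ω, harmonicWeight lam m (p j ω) :=
        integral_finsetSum _ fun j _ => integrable_harmonicWeight (hmeas j) m
    _ ≤ ∑ _j ∈ S₀, c * harmonic m := sum_le_sum hnull_weight
    _ = (S₀.card : ℝ) / m * α := by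
        have hm' : (0 : ℝ) < m := by exact_mod_cast hm
        rw [sum_const, nsmul_eq_mul]
        simp only [c]
        field_simp

/-- Benjamini–Yekutieli under arbitrary dependence: with thresholds
`λ_j = αj/(m·H_m)`, `H_m = ∑_{l=1}^m 1/l`, applied as a step-up rule to values with
super uniform nulls, the FDR is at most `(m₀/m)·α`. -/
theorem stmt_4 {Ω : Type*} [MeasureSpace Ω] [IsProbabilityMeasure (ℙ : Measure Ω)]
    {m : ℕ} (hm : 0 < m) (p : Fin m → Ω → ℝ) (S₀ : Finset (Fin m))
    (α : ℝ) (hα : α ∈ Set.Ioo (0 : ℝ) 1)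
    (hmeas : ∀ j, Measurable (p j))
    (hrange : ∀ j ω, p j ω ∈ Set.Icc (0 : ℝ) 1)
    (hnull : ∀ j ∈ S₀, ∀ t ∈ Set.Icc (0 : ℝ) 1,
      ℙ {ω | p j ω ≤ t} ≤ ENNReal.ofReal t)
    (lam : ℕ → ℝ)
    (hlam : ∀ j, lam j = α * j / (m * ∑ l ∈ Finset.Icc 1 m, (1 : ℝ) / l)) :
    ∫ ω, ((Set.ncard {i : Fin m | i ∈ S₀ ∧ stepUpRejects (fun j => p j ω) lam i} : ℝ) /
        ((max (stepUpIndex (fun j => p j ω) lam) 1 : ℕ) : ℝ)) ∂ℙ ≤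
      (S₀.card : ℝ) / m * α :=
  stmt_4_general hm p S₀ α hα hmeas hnull lam hlam
end

section
/- If a random variable p on [0,1] has non-decreasing density f₀, then for any τ ∈ (0,1) and any strictly increasing integrable Q, E[1{p > τ}(Q(p) - Q(τ))] ≥ (1-τ)·E[Q(U) - Q(τ) | U > τ] for U uniform on (0,1). Consequently the estimator π̄₀ is not under-biased for nulls with non-decreasing density. -/
/-!
Write `g u = Q u - Q τ` and `h = f₀ - 1`; the claim is `0 ≤ ∫_τ^1 g h`. Since `f₀` is
non-decreasing with total mass one, its mass on `[τ, 1]` is at least `1 - τ`, i.e.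
`∫_τ^1 h ≥ 0`. The monotone function `h` changes sign at most once on `[τ, 1)`, from
negative to positive, at some point `c`; as `g` is non-decreasing, `(g u - g c) h u ≥ 0`
everywhere, whence `∫ g h ≥ g c ∫ h ≥ 0`. If `h` never becomes positive, `∫ h ≥ 0` forces
`h = 0` almost everywhere.
-/

open MeasureTheory Set

theorem MonotoneOn.mul_integral_le_mul_integral_of_mem_Icc {f : ℝ → ℝ} {a b c : ℝ}
    (hf : MonotoneOn f (Icc a b)) (hfi : IntervalIntegrable f volume a b) (hc : c ∈ Icc a b) :
    (b - c) * ∫ x in a..b, f x ≤ (b - a) * ∫ x in c..b, f x := by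
  have hac : IntervalIntegrable f volume a c :=
    hfi.mono_set (uIcc_subset_uIcc_left (by rwa [uIcc_of_le (hc.1.trans hc.2)]))
  have hcb : IntervalIntegrable f volume c b :=
    hfi.mono_set (uIcc_subset_uIcc_right (by rwa [uIcc_of_le (hc.1.trans hc.2)]))
  have left : ∫ x in a..c, f x ≤ (c - a) * f c := by
    simpa using intervalIntegral.integral_mono_on hc.1 hac intervalIntegrable_const
      fun x hx => hf ⟨hx.1, hx.2.trans hc.2⟩ hc hx.2
  have right : (b - c) * f c ≤ ∫ x in c..b, f x := by
    simpa using intervalIntegral.integral_mono_on hc.2 intervalIntegrable_const hcb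
      fun x hx => hf hc ⟨hc.1.trans hx.1, hx.2⟩ hx.1
  rw [← intervalIntegral.integral_add_adjacent_intervals hac hcb]
  nlinarith [mul_le_mul_of_nonneg_left left (sub_nonneg.2 hc.2),
    mul_le_mul_of_nonneg_left right (sub_nonneg.2 hc.1)]

theorem MonotoneOn.exists_sign_change {h : ℝ → ℝ} {a b x₁ : ℝ} (hh : MonotoneOn h (Ico a b))
    (hx₁ : x₁ ∈ Ico a b) (hpos : 0 < h x₁) :
    ∃ c ∈ Ico a b, (∀ x ∈ Ico a b, x < c → h x ≤ 0) ∧ ∀ x ∈ Ico a b, c < x → 0 ≤ h x := by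
  set S := {x ∈ Ico a b | 0 < h x}
  have hS : S.Nonempty := ⟨x₁, hx₁, hpos⟩
  have hSbdd : BddBelow S := ⟨a, fun x hx => hx.1.1⟩
  refine ⟨sInf S, ⟨le_csInf hS fun x hx => hx.1.1, (csInf_le hSbdd ⟨hx₁, hpos⟩).trans_lt hx₁.2⟩,
    fun x hx hxc => ?_, fun x hx hcx => ?_⟩
  · by_contra! hx0
    exact (csInf_le hSbdd ⟨hx, hx0⟩).not_gt hxc
  · obtain ⟨s, hsS, hsx⟩ := exists_lt_of_csInf_lt hS hcx
    exact hsS.2.le.trans (hh hsS.1 hx hsx.le)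

theorem integral_mul_nonneg_of_monotoneOn {g h : ℝ → ℝ} {a b : ℝ} (hab : a ≤ b)
    (hg : MonotoneOn g (Ico a b)) (hg0 : ∀ x ∈ Ico a b, 0 ≤ g x) (hh : MonotoneOn h (Ico a b))
    (hh0 : 0 ≤ ∫ x in a..b, h x) (hhi : IntervalIntegrable h volume a b)
    (hghi : IntervalIntegrable (fun x => g x * h x) volume a b) :
    0 ≤ ∫ x in a..b, g x * h x := by
  rw [intervalIntegral.integral_of_le hab, integral_Ioc_eq_integral_Ioo] at hh0 ⊢
  have hhi' : IntegrableOn h (Ioo a b) := hhi.1.mono_set Ioo_subset_Ioc_self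
  by_cases hpos : ∃ x₁ ∈ Ico a b, 0 < h x₁
  · obtain ⟨x₁, hx₁, hpos⟩ := hpos
    obtain ⟨c, hc, hneg, hnonneg⟩ := hh.exists_sign_change hx₁ hpos
    have key : ∀ x ∈ Ioo a b, g c * h x ≤ g x * h x := by
      intro x hx
      have hx' : x ∈ Ico a b := Ioo_subset_Ico_self hx
      rcases lt_trichotomy x c with hxc | rfl | hcx
      · exact mul_le_mul_of_nonpos_right (hg hx' hc hxc.le) (hneg x hx' hxc)
      · exact le_rfl
      · exact mul_le_mul_of_nonneg_right (hg hc hx' hcx.le) (hnonneg x hx' hcx)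
    calc 0 ≤ g c * ∫ x in Ioo a b, h x := mul_nonneg (hg0 c hc) hh0
      _ = ∫ x in Ioo a b, g c * h x := (integral_const_mul _ _).symm
      _ ≤ ∫ x in Ioo a b, g x * h x :=
        setIntegral_mono_on (hhi'.const_mul _) (hghi.1.mono_set Ioo_subset_Ioc_self)
          measurableSet_Ioo key
  · push Not at hpos
    have hnonpos : ∀ x ∈ Ioo a b, h x ≤ 0 := fun x hx => hpos x (Ioo_subset_Ico_self hx)
    have hzero : ∫ x in Ioo a b, -h x = 0 := by
      rw [integral_neg, le_antisymm (setIntegral_nonpos measurableSet_Ioo hnonpos) hh0, neg_zero]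
    have hae : (fun x => -h x) =ᵐ[volume.restrict (Ioo a b)] 0 :=
      (setIntegral_eq_zero_iff_of_nonneg_ae
        ((ae_restrict_iff' measurableSet_Ioo).2 <| .of_forall fun x hx =>
          neg_nonneg.2 (hnonpos x hx))
        hhi'.neg).1 hzero
    have hgh : (fun x => g x * h x) =ᵐ[volume.restrict (Ioo a b)] 0 :=
      hae.mono fun x hx => by simp_all
    simp [integral_congr_ae hgh]

theorem stmt_13_general (f₀ Q : ℝ → ℝ) (τ : ℝ) (hτ : τ ∈ Set.Ioo (0 : ℝ) 1)
    (hmono : MonotoneOn f₀ (Set.Icc 0 1))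
    (hint : IntervalIntegrable f₀ MeasureTheory.volume 0 1)
    (htotal : ∫ u in (0 : ℝ)..1, f₀ u = 1)
    (hQ : StrictMonoOn Q (Set.Ioo 0 1))
    (hQint : IntervalIntegrable Q MeasureTheory.volume τ 1)
    (hQfint : IntervalIntegrable (fun u => (Q u - Q τ) * f₀ u) MeasureTheory.volume τ 1) :
    ∫ u in τ..1, (Q u - Q τ) ≤ ∫ u in τ..1, (Q u - Q τ) * f₀ u := by
  have htail : Ico τ 1 ⊆ Icc 0 1 := Ico_subset_Icc_self.trans (Icc_subset_Icc_left hτ.1.le)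
  have hfτ : IntervalIntegrable f₀ volume τ 1 :=
    hint.mono_set <| uIcc_subset_uIcc_right <| by
      rw [uIcc_of_le zero_le_one]; exact Ioo_subset_Icc_self hτ
  have hgi : IntervalIntegrable (fun u => Q u - Q τ) volume τ 1 := hQint.sub intervalIntegrable_const
  have hg : MonotoneOn (fun u => Q u - Q τ) (Ico τ 1) := fun x hx y hy hxy =>
    sub_le_sub_right (hQ.monotoneOn ⟨hτ.1.trans_le hx.1, hx.2⟩ ⟨hτ.1.trans_le hy.1, hy.2⟩ hxy) _
  have hmass : 0 ≤ ∫ u in τ..1, (f₀ u - 1) := by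
    have := hmono.mul_integral_le_mul_integral_of_mem_Icc hint (Ioo_subset_Icc_self hτ)
    rw [intervalIntegral.integral_sub hfτ intervalIntegrable_const]
    simp only [htotal, intervalIntegral.integral_const, smul_eq_mul] at this ⊢
    linarith
  have key := integral_mul_nonneg_of_monotoneOn hτ.2.le hg
    (fun x hx => by simpa using hg ⟨le_rfl, hτ.2⟩ hx hx.1)
    (fun x hx y hy hxy => sub_le_sub_right (hmono (htail hx) (htail hy) hxy) _)
    hmass (hfτ.sub intervalIntegrable_const) ((hQfint.sub hgi).congr fun x _ => by ring)
  simp only [mul_sub, mul_one] at key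
  rw [intervalIntegral.integral_sub hQfint hgi] at key
  linarith

/-- If a null p-value has a non-decreasing density `f₀` on `[0,1]`, then for any
`τ ∈ (0,1)` and strictly increasing integrable `Q`,
`E[1{p > τ}(Q(p) - Q(τ))] ≥ ∫_τ^1 (Q(u) - Q(τ)) du = (1-τ)·E[Q(U) - Q(τ) | U > τ]`
for `U` uniform; i.e. the estimator `π̄₀` is not under-biased for such nulls. -/
theorem stmt_13 (f₀ Q : ℝ → ℝ) (τ : ℝ) (hτ : τ ∈ Set.Ioo (0 : ℝ) 1)
    (hnn : ∀ u ∈ Set.Icc (0 : ℝ) 1, 0 ≤ f₀ u)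
    (hmono : MonotoneOn f₀ (Set.Icc 0 1))
    (hint : IntervalIntegrable f₀ MeasureTheory.volume 0 1)
    (htotal : ∫ u in (0 : ℝ)..1, f₀ u = 1)
    (hQ : StrictMonoOn Q (Set.Ioo 0 1))
    (hQint : IntervalIntegrable Q MeasureTheory.volume τ 1)
    (hQfint : IntervalIntegrable (fun u => (Q u - Q τ) * f₀ u) MeasureTheory.volume τ 1) :
    ∫ u in τ..1, (Q u - Q τ) ≤ ∫ u in τ..1, (Q u - Q τ) * f₀ u :=
  stmt_13_general f₀ Q τ hτ hmono hint htotal hQ hQint hQfint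
end

section
/- Let δ(ε) = Φ(-ε/μ + μ/2) - e^ε·Φ(-ε/μ - μ/2) be the δ via which μ-GDP implies (ε,δ)-DP; then δ(ε) ≥ 0, that is, for all ε > 0 and μ > 0, Φ(-ε/μ + μ/2) ≥ e^ε·Φ(-ε/μ - μ/2). -/
open ProbabilityTheory MeasureTheory Set

lemma cdf_gaussian_eq_integral (m : ℝ) (x : ℝ) :
    cdf (gaussianReal m 1) x = ∫ t in Set.Iic x, gaussianPDFReal m 1 t := by
  rw [cdf_eq_real, measureReal_def, gaussianReal_apply_eq_integral m one_ne_zero,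
    ENNReal.toReal_ofReal]
  exact setIntegral_nonneg measurableSet_Iic fun t _ ↦ gaussianPDFReal_nonneg m 1 t

lemma cdf_gaussian_shift (m x : ℝ) :
    cdf (gaussianReal m 1) x = cdf (gaussianReal 0 1) (x - m) := by
  have h : (gaussianReal 0 1).map (· + m) = gaussianReal m 1 := by
    simpa using gaussianReal_map_add_const (μ := 0) (v := 1) m
  rw [cdf_eq_real, measureReal_def, cdf_eq_real, measureReal_def, ← h,
    Measure.map_apply (measurable_add_const m) measurableSet_Iic]
  rw [Set.preimage_add_const_Iic]

/-- Nonnegativity of the GDP-to-DP conversion function: for all `ε > 0` and `μ > 0`,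
`Φ(μ/2 - ε/μ) ≥ e^ε · Φ(-μ/2 - ε/μ)`, where `Φ` is the standard normal CDF; equivalently
`δ(ε) = Φ(μ/2 - ε/μ) - e^ε Φ(-μ/2 - ε/μ) ≥ 0`. -/
theorem stmt_19 (ε μ : ℝ) (hε : 0 < ε) (hμ : 0 < μ) :
    Real.exp ε * cdf (gaussianReal 0 1) (-μ / 2 - ε / μ) ≤
      cdf (gaussianReal 0 1) (μ / 2 - ε / μ) := by
  set a : ℝ := -μ / 2 - ε / μ with ha
  have hR : cdf (gaussianReal (-μ) 1) a = cdf (gaussianReal 0 1) (μ / 2 - ε / μ) := by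
    rw [cdf_gaussian_shift]
    congr 1
    rw [ha]
    ring
  rw [← hR, cdf_gaussian_eq_integral, cdf_gaussian_eq_integral, ← integral_const_mul]
  apply setIntegral_mono_on
  · exact (integrable_gaussianPDFReal 0 1).restrict.const_mul _
  · exact (integrable_gaussianPDFReal (-μ) 1).restrict
  · exact measurableSet_Iic
  · intro x hx
    simp only [Set.mem_Iic] at hx
    simp only [gaussianPDFReal, NNReal.coe_one, mul_one]
    rw [mul_comm (Real.exp ε), mul_assoc, ← Real.exp_add]
    have hc : (0:ℝ) ≤ (Real.sqrt (2 * Real.pi))⁻¹ := by positivity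
    apply mul_le_mul_of_nonneg_left _ hc
    apply Real.exp_le_exp.2
    have hx' : μ * x ≤ μ * a := mul_le_mul_of_nonneg_left hx hμ.le
    have h2 : μ * a = -μ^2 / 2 - ε := by
      rw [ha]; field_simp
    have hμx : μ * x ≤ -μ^2 / 2 - ε := h2 ▸ hx'
    nlinarith [hμx]
end
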